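/- For any three density matrices ρ, σ, ξ on the same finite-dimensional Hilbert space, F(ρ, ξ) + F(σ, ξ) ≤ 1 + √(F(ρ, σ)). -/

import Mathlib

open Matrix ComplexOrder

open Classical in
noncomputable def matSqrt {d : Type*} [Fintype d] [DecidableEq d]
    (A : Matrix d d ℂ) : Matrix d d ℂ :=
  if h : A.PosSemidef then
    (h.1.eigenvectorUnitary : Matrix d d ℂ) *
      diagonal ((↑) ∘ Real.sqrt ∘ h.1.eigenvalues) *
      (star h.1.eigenvectorUnitary : Matrix d d ℂ)
  else 0

/-- Fidelity `F(ρ,σ) = (Tr √(√σ ρ √σ))²`. -/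
noncomputable def fid {d : Type*} [Fintype d] [DecidableEq d]
    (ρ σ : Matrix d d ℂ) : ℝ :=
  ((matSqrt (matSqrt σ * ρ * matSqrt σ)).trace).re ^ 2

/-!
Write `‖A‖₁ = Tr |A|` for the trace norm, so that `F(ρ, σ) = ‖√ρ √σ‖₁²`. Polar decomposition
shows that `|Tr (W A)| ≤ ‖A‖₁` for every contraction `W` and that equality is attained. With
contractions `W₁`, `W₂` attaining `‖√ρ √ξ‖₁` and `‖√σ √ξ‖₁`, the matrices `u = W₁ √ρ`,
`v = W₂ √σ` and `w = √ξ` have Hilbert–Schmidt norm at most one, `⟪w, u⟫ = √F(ρ, ξ)`,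
`⟪w, v⟫ = √F(σ, ξ)` and `|⟪u, v⟫| ≤ √F(ρ, σ)`. For any such vectors, Cauchy–Schwarz applied to
`w` and `α u + β v` gives `α² + β² ≤ 1 + γ`.
-/

open scoped MatrixOrder InnerProductSpace

lemma sq_add_sq_le_one_add_of_inner {𝕜 E : Type*} [RCLike 𝕜] [SeminormedAddCommGroup E]
    [InnerProductSpace 𝕜 E] {u v w : E} {α β γ : ℝ} (hu : ‖u‖ ≤ 1) (hv : ‖v‖ ≤ 1)
    (hw : ‖w‖ ≤ 1) (hwu : ⟪w, u⟫_𝕜 = α) (hwv : ⟪w, v⟫_𝕜 = β) (huv : ‖⟪u, v⟫_𝕜‖ ≤ γ) :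
    α ^ 2 + β ^ 2 ≤ 1 + γ := by
  have hγ : 0 ≤ γ := (norm_nonneg _).trans huv
  set z := (α : 𝕜) • u + (β : 𝕜) • v
  have hwz : ⟪w, z⟫_𝕜 = ((α ^ 2 + β ^ 2 : ℝ) : 𝕜) := by
    simp only [z, inner_add_right, inner_smul_right, hwu, hwv]
    push_cast; ring
  have hz_ge : α ^ 2 + β ^ 2 ≤ ‖z‖ := by
    calc α ^ 2 + β ^ 2 = ‖⟪w, z⟫_𝕜‖ := by
          rw [hwz, RCLike.norm_ofReal, abs_of_nonneg (by positivity)]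
      _ ≤ ‖w‖ * ‖z‖ := norm_inner_le_norm w z
      _ ≤ ‖z‖ := mul_le_of_le_one_left (norm_nonneg z) hw
  have hz_le : ‖z‖ ^ 2 ≤ (α ^ 2 + β ^ 2) * (1 + γ) := by
    have hαu : (|α| * ‖u‖) ^ 2 ≤ α ^ 2 := by
      rw [mul_pow, sq_abs]
      exact mul_le_of_le_one_right (sq_nonneg α) (pow_le_one₀ (norm_nonneg u) hu)
    have hβv : (|β| * ‖v‖) ^ 2 ≤ β ^ 2 := by
      rw [mul_pow, sq_abs]
      exact mul_le_of_le_one_right (sq_nonneg β) (pow_le_one₀ (norm_nonneg v) hv)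
    have hcross : α * β * RCLike.re ⟪u, v⟫_𝕜 ≤ |α * β| * γ :=
      (le_abs_self _).trans ((abs_mul _ _).trans_le
        (mul_le_mul_of_nonneg_left ((RCLike.abs_re_le_norm _).trans huv) (abs_nonneg _)))
    have hamgm : 2 * |α * β| ≤ α ^ 2 + β ^ 2 := by
      rw [abs_mul]; nlinarith [sq_nonneg (|α| - |β|), sq_abs α, sq_abs β]
    rw [norm_add_sq (𝕜 := 𝕜), norm_smul, norm_smul, inner_smul_left, inner_smul_right,
      RCLike.conj_ofReal, ← mul_assoc, ← RCLike.ofReal_mul, RCLike.re_ofReal_mul,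
      RCLike.norm_ofReal, RCLike.norm_ofReal]
    nlinarith [mul_le_mul_of_nonneg_right hamgm hγ]
  nlinarith [pow_le_pow_left₀ (by positivity) hz_ge 2]

lemma star_mul_self_mul_le_one {R : Type*} [Semiring R] [PartialOrder R] [StarRing R]
    [StarOrderedRing R] {a b : R} (ha : star a * a ≤ 1) (hb : star b * b ≤ 1) :
    star (a * b) * (a * b) ≤ 1 :=
  calc star (a * b) * (a * b) = star b * (star a * a) * b := by simp only [star_mul, mul_assoc]
    _ ≤ star b * 1 * b := star_left_conjugate_le_conjugate ha b
    _ ≤ 1 := by rwa [mul_one]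

lemma CStarAlgebra.star_mul_self_le_one_iff {A : Type*} [CStarAlgebra A] [PartialOrder A]
    [StarOrderedRing A] {a : A} : star a * a ≤ 1 ↔ ‖a‖ ≤ 1 := by
  rw [← CStarAlgebra.norm_le_one_iff_of_nonneg _ (star_mul_self_nonneg a),
    CStarRing.norm_star_mul_self, ← sq, sq_le_one_iff₀ (norm_nonneg a)]

lemma matSqrt_eq_sqrt {n : Type*} [Fintype n] [DecidableEq n] {A : Matrix n n ℂ}
    (hA : A.PosSemidef) : matSqrt A = CFC.sqrt A := by
  rw [matSqrt, dif_pos hA, CFC.sqrt_eq_real_sqrt A hA.nonneg, cfcₙ_eq_cfc, hA.1.cfc_eq,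
    Matrix.IsHermitian.cfc, Unitary.conjStarAlgAut_apply]
  rfl

namespace Matrix

variable {n : Type*} [Fintype n] [DecidableEq n]

lemma conjTranspose_sqrt (A : Matrix n n ℂ) : (CFC.sqrt A)ᴴ = CFC.sqrt A :=
  (CFC.sqrt_nonneg A).isSelfAdjoint

open scoped Matrix.Norms.L2Operator in
lemma conjTranspose_mul_self_le_one_iff {W : Matrix n n ℂ} : Wᴴ * W ≤ 1 ↔ W * Wᴴ ≤ 1 := by
  have h := CStarAlgebra.star_mul_self_le_one_iff (a := Wᴴ)
  rw [star_eq_conjTranspose, conjTranspose_conjTranspose, l2_opNorm_conjTranspose,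
    ← CStarAlgebra.star_mul_self_le_one_iff, star_eq_conjTranspose] at h
  exact h.symm

lemma trace_mul_mul_conjTranspose_le {P W : Matrix n n ℂ} (hP : 0 ≤ P) (hW : Wᴴ * W ≤ 1) :
    (W * P * Wᴴ).trace ≤ P.trace := by
  set S := CFC.sqrt P
  have hSS : S * S = P := CFC.sqrt_mul_sqrt_self P
  have hconj := star_left_conjugate_le_conjugate hW S
  rw [← sub_nonneg, nonneg_iff_posSemidef, star_eq_conjTranspose, conjTranspose_sqrt,
    Matrix.mul_one, hSS] at hconj
  calc (W * P * Wᴴ).trace = ((W * S) * (S * Wᴴ)).trace := by rw [← hSS]; noncomm_ring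
    _ = (S * (Wᴴ * W) * S).trace := by rw [trace_mul_comm]; noncomm_ring
    _ ≤ P.trace := by have := hconj.trace_nonneg; rwa [trace_sub, sub_nonneg] at this

lemma re_trace_mul_mul_conjTranspose_le_one {W T : Matrix n n ℂ} (hW : Wᴴ * W ≤ 1)
    (hT : (T * Tᴴ).trace.re ≤ 1) : (W * T * (W * T)ᴴ).trace.re ≤ 1 := by
  have h := trace_mul_mul_conjTranspose_le (posSemidef_self_mul_conjTranspose T).nonneg hW
  rw [conjTranspose_mul, ← Matrix.mul_assoc, Matrix.mul_assoc W]
  exact (Complex.le_def.mp h).1.trans hT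

lemma exists_polar_decomposition (A : Matrix n n ℂ) :
    ∃ V : Matrix n n ℂ, A = V * CFC.abs A ∧ Vᴴ * V * CFC.abs A = CFC.abs A ∧ Vᴴ * V ≤ 1 := by
  set P := CFC.abs A
  have hPH : Pᴴ = P := (CFC.abs_nonneg A).isSelfAdjoint
  have hPP : P * P = Aᴴ * A := CFC.abs_mul_abs A
  have hmul (f g : ℝ → ℝ) : cfc f P * cfc g P = cfc (fun x => f x * g x) P :=
    (cfc_mul f g P (P.finite_real_spectrum.continuousOn f)
      (P.finite_real_spectrum.continuousOn g)).symm
  have hPid : cfc id P = P := cfc_id ℝ P hPH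
  -- the Moore–Penrose inverse of `P`, since `(0 : ℝ)⁻¹ = 0`
  set Q := cfc (·⁻¹ : ℝ → ℝ) P
  have hQH : Qᴴ = Q := (cfc_predicate _ P : IsSelfAdjoint Q)
  have hPQP : P * Q * P = P := by
    rw [← hPid, hmul, hmul]
    refine cfc_congr fun x _ => ?_
    by_cases hx : x = 0 <;> simp [hx]
  have hVV : (A * Q)ᴴ * (A * Q) = cfc (fun x : ℝ => x⁻¹ * x * x * x⁻¹) P := by
    calc (A * Q)ᴴ * (A * Q) = Q * cfc id P * cfc id P * Q := by
          rw [hPid, conjTranspose_mul, hQH, Matrix.mul_assoc Q P, hPP]; noncomm_ring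
      _ = _ := by rw [hmul, hmul, hmul]; rfl
  refine ⟨A * Q, ?_, ?_, ?_⟩
  · have hR : (A * (1 - Q * P))ᴴ * (A * (1 - Q * P)) = 0 := by
      calc (A * (1 - Q * P))ᴴ * (A * (1 - Q * P))
          = (P - P * Q * P) * (P - P * Q * P) := by
            rw [conjTranspose_mul, conjTranspose_sub, conjTranspose_mul, hQH, hPH,
              conjTranspose_one, Matrix.mul_assoc, ← Matrix.mul_assoc Aᴴ, ← hPP]
            noncomm_ring
        _ = 0 := by rw [hPQP, sub_self, zero_mul]
    rw [conjTranspose_mul_self_eq_zero, Matrix.mul_sub, Matrix.mul_one, sub_eq_zero] at hR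
    exact hR.trans (Matrix.mul_assoc A Q P).symm
  · calc (A * Q)ᴴ * (A * Q) * P = cfc (fun x : ℝ => x⁻¹ * x * x * x⁻¹) P * cfc id P := by
          rw [hVV, hPid]
      _ = P := by
          rw [hmul]
          conv_rhs => rw [← hPid]
          refine cfc_congr fun x _ => ?_
          by_cases hx : x = 0 <;> simp [hx]
  · rw [hVV]
    refine cfc_le_one _ _ fun x _ => ?_
    by_cases hx : x = 0 <;> simp [hx]

noncomputable def traceNorm (A : Matrix n n ℂ) : ℝ := (CFC.abs A).trace.re

lemma ofReal_traceNorm (A : Matrix n n ℂ) : (traceNorm A : ℂ) = (CFC.abs A).trace :=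
  (Complex.eq_re_of_ofReal_le (by
    rw [Complex.ofReal_zero]; exact (CFC.abs_nonneg A).posSemidef.trace_nonneg)).symm

lemma traceNorm_nonneg (A : Matrix n n ℂ) : 0 ≤ traceNorm A :=
  (Complex.nonneg_iff.mp (CFC.abs_nonneg A).posSemidef.trace_nonneg).1

lemma exists_trace_mul_eq_traceNorm (A : Matrix n n ℂ) :
    ∃ W : Matrix n n ℂ, Wᴴ * W ≤ 1 ∧ (W * A).trace = traceNorm A := by
  obtain ⟨V, hA, hVVP, hVV⟩ := exists_polar_decomposition A
  refine ⟨Vᴴ, ?_, ?_⟩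
  · rwa [conjTranspose_conjTranspose, ← conjTranspose_mul_self_le_one_iff]
  · conv_lhs => rw [hA, ← Matrix.mul_assoc, hVVP]
    exact (ofReal_traceNorm A).symm

section HilbertSchmidt

/- These local instances put a second topology on matrices, so the continuous functional
calculus must stay out of this section. -/

noncomputable abbrev hilbertSchmidtSeminormedAddCommGroup :
    SeminormedAddCommGroup (Matrix n n ℂ) :=
  toMatrixSeminormedAddCommGroup 1 PosSemidef.one

attribute [local instance] hilbertSchmidtSeminormedAddCommGroup

noncomputable abbrev hilbertSchmidtInnerProductSpace : InnerProductSpace ℂ (Matrix n n ℂ) :=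
  toMatrixInnerProductSpace 1 PosSemidef.one

attribute [local instance] hilbertSchmidtInnerProductSpace

lemma hilbertSchmidt_inner_eq (A B : Matrix n n ℂ) : ⟪A, B⟫_ℂ = (B * Aᴴ).trace := by
  have : ⟪A, B⟫_ℂ = (B * 1 * Aᴴ).trace := rfl
  rw [this, Matrix.mul_one]

lemma hilbertSchmidt_norm_eq (A : Matrix n n ℂ) : ‖A‖ = √(A * Aᴴ).trace.re := by
  rw [norm_eq_sqrt_re_inner (𝕜 := ℂ), hilbertSchmidt_inner_eq]; rfl

lemma norm_trace_mul_conjTranspose_le (A B : Matrix n n ℂ) :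
    ‖(B * Aᴴ).trace‖ ≤ √(A * Aᴴ).trace.re * √(B * Bᴴ).trace.re := by
  rw [← hilbertSchmidt_norm_eq, ← hilbertSchmidt_norm_eq, ← hilbertSchmidt_inner_eq]
  exact norm_inner_le_norm A B

lemma sq_add_sq_le_one_add_of_trace {u v w : Matrix n n ℂ} {α β γ : ℝ}
    (hu : (u * uᴴ).trace.re ≤ 1) (hv : (v * vᴴ).trace.re ≤ 1) (hw : (w * wᴴ).trace.re ≤ 1)
    (hwu : (u * wᴴ).trace = α) (hwv : (v * wᴴ).trace = β) (huv : ‖(u * vᴴ).trace‖ ≤ γ) :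
    α ^ 2 + β ^ 2 ≤ 1 + γ := by
  have hnorm {x : Matrix n n ℂ} (hx : (x * xᴴ).trace.re ≤ 1) : ‖x‖ ≤ 1 := by
    rw [hilbertSchmidt_norm_eq, Real.sqrt_le_one]; exact hx
  refine sq_add_sq_le_one_add_of_inner (𝕜 := ℂ) (hnorm hu) (hnorm hv) (hnorm hw) ?_ ?_ ?_
  · rw [hilbertSchmidt_inner_eq]; exact hwu
  · rw [hilbertSchmidt_inner_eq]; exact hwv
  · rw [norm_inner_symm, hilbertSchmidt_inner_eq]; exact huv

end HilbertSchmidt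

lemma norm_trace_mul_le_traceNorm {X : Matrix n n ℂ} (hX : Xᴴ * X ≤ 1) (A : Matrix n n ℂ) :
    ‖(X * A).trace‖ ≤ traceNorm A := by
  obtain ⟨V, hA, -, hV⟩ := exists_polar_decomposition A
  set P := CFC.abs A
  set S := CFC.sqrt P
  have hSH : Sᴴ = S := conjTranspose_sqrt P
  have hSS : S * S = P := CFC.sqrt_mul_sqrt_self P (CFC.abs_nonneg A)
  have hS : (S * Sᴴ).trace.re = traceNorm A := by rw [hSH, hSS]; rfl
  have hXVS : (X * V * S * (X * V * S)ᴴ).trace.re ≤ traceNorm A := by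
    have h := trace_mul_mul_conjTranspose_le (CFC.abs_nonneg A) (star_mul_self_mul_le_one hX hV)
    have e : X * V * S * (X * V * S)ᴴ = X * V * P * (X * V)ᴴ := by
      rw [← hSS, conjTranspose_mul (X * V), hSH]; noncomm_ring
    rw [e]
    exact (Complex.le_def.mp h).1
  have e : X * A = X * V * S * Sᴴ := by rw [hSH, hA, ← hSS]; noncomm_ring
  calc ‖(X * A).trace‖ ≤ √(S * Sᴴ).trace.re * √(X * V * S * (X * V * S)ᴴ).trace.re := by
        rw [e]; exact norm_trace_mul_conjTranspose_le S (X * V * S)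
    _ ≤ √(traceNorm A) * √(traceNorm A) := by rw [hS]; gcongr
    _ = traceNorm A := Real.mul_self_sqrt (traceNorm_nonneg A)

lemma sq_traceNorm_add_sq_traceNorm_le {R S X : Matrix n n ℂ} (hR : (R * Rᴴ).trace.re ≤ 1)
    (hS : (S * Sᴴ).trace.re ≤ 1) (hX : (Xᴴ * X).trace.re ≤ 1) :
    traceNorm (R * X) ^ 2 + traceNorm (S * X) ^ 2 ≤ 1 + traceNorm (R * Sᴴ) := by
  obtain ⟨W₁, hW₁, htr₁⟩ := exists_trace_mul_eq_traceNorm (R * X)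
  obtain ⟨W₂, hW₂, htr₂⟩ := exists_trace_mul_eq_traceNorm (S * X)
  refine sq_add_sq_le_one_add_of_trace (w := Xᴴ) (re_trace_mul_mul_conjTranspose_le_one hW₁ hR)
    (re_trace_mul_mul_conjTranspose_le_one hW₂ hS) (by rwa [conjTranspose_conjTranspose]) ?_ ?_ ?_
  · rw [conjTranspose_conjTranspose, Matrix.mul_assoc, htr₁]
  · rw [conjTranspose_conjTranspose, Matrix.mul_assoc, htr₂]
  · have hW : (W₂ᴴ * W₁)ᴴ * (W₂ᴴ * W₁) ≤ 1 :=
      star_mul_self_mul_le_one (by rwa [star_eq_conjTranspose, conjTranspose_conjTranspose,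
        ← conjTranspose_mul_self_le_one_iff]) hW₁
    have e : W₁ * R * (Sᴴ * W₂ᴴ) = W₁ * R * Sᴴ * W₂ᴴ := by noncomm_ring
    have e' : W₂ᴴ * (W₁ * R * Sᴴ) = W₂ᴴ * W₁ * (R * Sᴴ) := by noncomm_ring
    rw [conjTranspose_mul, e, trace_mul_comm, e']
    exact norm_trace_mul_le_traceNorm hW (R * Sᴴ)

end Matrix

lemma fid_eq_traceNorm_sq {n : Type*} [Fintype n] [DecidableEq n] {ρ σ : Matrix n n ℂ}
    (hρ : ρ.PosSemidef) (hσ : σ.PosSemidef) :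
    fid ρ σ = Matrix.traceNorm (CFC.sqrt ρ * CFC.sqrt σ) ^ 2 := by
  have e : CFC.sqrt σ * ρ * CFC.sqrt σ =
      (CFC.sqrt ρ * CFC.sqrt σ)ᴴ * (CFC.sqrt ρ * CFC.sqrt σ) := by
    rw [conjTranspose_mul, conjTranspose_sqrt, conjTranspose_sqrt, Matrix.mul_assoc _ (CFC.sqrt ρ),
      ← Matrix.mul_assoc (CFC.sqrt ρ), CFC.sqrt_mul_sqrt_self ρ hρ.nonneg, Matrix.mul_assoc]
  rw [fid, matSqrt_eq_sqrt hσ, e, matSqrt_eq_sqrt (posSemidef_conjTranspose_mul_self _)]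
  rfl

/-- Nayak–Shor inequality: for density matrices ρ, σ, ξ on the same space,
F(ρ, ξ) + F(σ, ξ) ≤ 1 + √(F(ρ, σ)). -/
theorem fid_add_fid_le_one_add_sqrt_fid {d : ℕ}
    (ρ σ ξ : Matrix (Fin d) (Fin d) ℂ)
    (hρ : ρ.PosSemidef) (hρtr : ρ.trace = 1)
    (hσ : σ.PosSemidef) (hσtr : σ.trace = 1)
    (hξ : ξ.PosSemidef) (hξtr : ξ.trace = 1) :
    fid ρ ξ + fid σ ξ ≤ 1 + Real.sqrt (fid ρ σ) := by
  have hdensity {τ : Matrix (Fin d) (Fin d) ℂ} (hτ : τ.PosSemidef) (hτtr : τ.trace = 1) :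
      (CFC.sqrt τ * (CFC.sqrt τ)ᴴ).trace.re ≤ 1 := by
    rw [Matrix.conjTranspose_sqrt, CFC.sqrt_mul_sqrt_self τ hτ.nonneg, hτtr, Complex.one_re]
  have h := Matrix.sq_traceNorm_add_sq_traceNorm_le (hdensity hρ hρtr) (hdensity hσ hσtr)
    (X := CFC.sqrt ξ) (by simpa only [Matrix.conjTranspose_sqrt] using hdensity hξ hξtr)
  rwa [Matrix.conjTranspose_sqrt, ← fid_eq_traceNorm_sq hρ hξ, ← fid_eq_traceNorm_sq hσ hξ,
    ← Real.sqrt_sq (Matrix.traceNorm_nonneg _), ← fid_eq_traceNorm_sq hρ hσ] at h
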